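/- For natural numbers c, d, let f(c,d) be the maximum of e(A) over all bipartite graphs of the form A = B ⊔ C with k(B) ≤ c and k(C) ≤ d. Then: (1) f(c,d) = e*(c+1) + e*(d+1) for all c, d ∈ ℕ; and (2) if 1 ≤ d ≤ c then f(c+1, d−1) ≥ f(c, d). -/

import Mathlib

noncomputable section

/-- A bipartite graph: two disjoint finite vertex sets `L`, `R`
and a set of edges `E ⊆ L × R`. -/
structure BipGraph (V : Type) [DecidableEq V] where
  L : Finset V
  R : Finset V
  disj : Disjoint L R
  E : Finset (V × V)
  E_sub : E ⊆ L ×ˢ R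

namespace BipGraph

variable {V : Type} [DecidableEq V]

/-- the vertex set -/
def verts (A : BipGraph V) : Finset V := A.L ∪ A.R

/-- `v A` is the number of vertices of `A` -/
def v (A : BipGraph V) : ℕ := A.verts.card

/-- `e A` is the number of edges of `A` -/
def e (A : BipGraph V) : ℕ := A.E.card

/-- the underlying simple graph on the vertex set of `A` -/
def graph (A : BipGraph V) : SimpleGraph {x : V // x ∈ A.verts} where
  Adj x y := (x.1, y.1) ∈ A.E ∨ (y.1, x.1) ∈ A.E
  symm := by
    constructor
    intro x y h
    exact h.symm
  loopless := by
    constructor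
    intro x h
    have hx : (x.1, x.1) ∈ A.E := by rcases h with h | h <;> exact h
    have hmem := A.E_sub hx
    rw [Finset.mem_product] at hmem
    exact Finset.disjoint_left.mp A.disj hmem.1 hmem.2

/-- `CC A` is the number of connected components of `A` (isolated vertices count). -/
def CC (A : BipGraph V) : ℕ := Nat.card A.graph.ConnectedComponent

/-- `k A = v A - CC A` -/
def k (A : BipGraph V) : ℕ := A.v - A.CC

/-- `A` is complete if every left-right pair is an edge. -/
def Complete (A : BipGraph V) : Prop := A.E = A.L ×ˢ A.R

/-- `A` is balanced if its parts differ in size by at most one. -/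
def Balanced (A : BipGraph V) : Prop := ((A.L.card : ℤ) - (A.R.card : ℤ)).natAbs ≤ 1

/-- `A` is null if it has no edges. -/
def Null (A : BipGraph V) : Prop := A.E = ∅

/-- the induced subgraph of `A` on a set `S` of vertices: the vertices of `A`
belonging to `S`, together with all edges of `A` between them. -/
def induce (A : BipGraph V) (S : Finset V) : BipGraph V where
  L := A.L ∩ S
  R := A.R ∩ S
  disj := A.disj.mono Finset.inter_subset_left Finset.inter_subset_left
  E := A.E.filter (fun p => p.1 ∈ S ∧ p.2 ∈ S)
  E_sub := by
    intro p hp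
    rw [Finset.mem_filter] at hp
    have hmem := A.E_sub hp.1
    rw [Finset.mem_product] at hmem ⊢
    exact ⟨Finset.mem_inter.mpr ⟨hmem.1, hp.2.1⟩, Finset.mem_inter.mpr ⟨hmem.2, hp.2.2⟩⟩

/-- the degree of a vertex: the number of edges incident to it -/
def deg (A : BipGraph V) (x : V) : ℕ :=
  (A.E.filter (fun p => p.1 = x ∨ p.2 = x)).card

/-- `A` is almost `ℓ`-complete: the two parts have sizes within `0.01 * ℓ` of `ℓ`,
and every vertex has degree at least `0.9 * ℓ`. -/
def AlmostComplete (ℓ : ℕ) (A : BipGraph V) : Prop :=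
  |(A.L.card : ℝ) - (ℓ : ℝ)| ≤ 0.01 * ℓ ∧ |(A.R.card : ℝ) - (ℓ : ℝ)| ≤ 0.01 * ℓ ∧
  ∀ x ∈ A.verts, (0.9 : ℝ) * ℓ ≤ (A.deg x : ℝ)

/-- the disjoint union of two vertex-disjoint bipartite graphs -/
def disjUnion (A B : BipGraph V) (h : Disjoint A.verts B.verts) : BipGraph V where
  L := A.L ∪ B.L
  R := A.R ∪ B.R
  disj := by
    have h1 : Disjoint A.L B.R := h.mono Finset.subset_union_left Finset.subset_union_right
    have h2 : Disjoint B.L A.R := h.symm.mono Finset.subset_union_left Finset.subset_union_right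
    rw [Finset.disjoint_union_left, Finset.disjoint_union_right, Finset.disjoint_union_right]
    exact ⟨⟨A.disj, h1⟩, ⟨h2, B.disj⟩⟩
  E := A.E ∪ B.E
  E_sub := by
    intro p hp
    rw [Finset.mem_union] at hp
    rw [Finset.mem_product]
    rcases hp with hp | hp
    · have := A.E_sub hp; rw [Finset.mem_product] at this
      exact ⟨Finset.mem_union_left _ this.1, Finset.mem_union_left _ this.2⟩
    · have := B.E_sub hp; rw [Finset.mem_product] at this
      exact ⟨Finset.mem_union_right _ this.1, Finset.mem_union_right _ this.2⟩

end BipGraph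

/-- `estar (2*b) = b^2` and `estar (2*b+1) = b*(b+1)`; i.e. `⌊c/2⌋ * ⌈c/2⌉`. -/
def estar (c : ℕ) : ℕ := (c / 2) * ((c + 1) / 2)

/-- `f c d` is the maximum of `e(A)` over bipartite graphs `A = B ⊔ C` with
`k(B) ≤ c` and `k(C) ≤ d`. -/
def fmax (c d : ℕ) : ℕ :=
  sSup {n : ℕ | ∃ (B C : BipGraph ℕ) (h : Disjoint B.verts C.verts),
    B.k ≤ c ∧ C.k ≤ d ∧ (B.disjUnion C h).e = n}

/-! A bipartite graph on `n` vertices has at most `e*(n) = ⌊n/2⌋⌈n/2⌉` edges. Applying this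
inside each connected component and merging the components with the superadditivity
`e*(a+1) + e*(b+1) ≤ e*(a+b+1)` gives `e(A) ≤ e*(k(A)+1)`, with equality for a balanced
complete bipartite graph on `k+1` vertices; so `f(c,d) = e*(c+1) + e*(d+1)`. The monotonicity
statement is the convexity of `e*`: its increments `e*(n+1) - e*(n) = ⌈n/2⌉` are nondecreasing. -/

theorem estar_succ (n : ℕ) : estar (n + 1) = estar n + (n + 1) / 2 := by
  rw [estar, estar, show (n + 1 + 1) / 2 = n / 2 + 1 by omega]
  ring

theorem estar_mono : Monotone estar :=
  monotone_nat_of_le_succ fun n => by rw [estar_succ]; omega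

theorem mul_le_estar (a b : ℕ) : a * b ≤ estar (a + b) := by
  obtain ⟨m, hm | hm⟩ := Nat.even_or_odd' (a + b)
  · rw [hm, estar, show 2 * m / 2 = m by omega, show (2 * m + 1) / 2 = m by omega]
    nlinarith [sq_nonneg ((a : ℤ) - b)]
  · rw [hm, estar, show (2 * m + 1) / 2 = m by omega, show (2 * m + 1 + 1) / 2 = m + 1 by omega]
    rcases le_or_gt a m with h | h <;> nlinarith

theorem estar_add_estar_succ_le {a b : ℕ} (h : b ≤ a) :
    estar a + estar (b + 1) ≤ estar (a + 1) + estar b := by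
  rw [estar_succ, estar_succ]
  have : (b + 1) / 2 ≤ (a + 1) / 2 := by omega
  omega

theorem estar_succ_add_estar_succ_le (a b : ℕ) :
    estar (a + 1) + estar (b + 1) ≤ estar (a + b + 1) := by
  induction b with
  | zero => simp [estar]
  | succ b ih =>
    calc estar (a + 1) + estar (b + 1 + 1)
        ≤ estar (a + b + 1) + estar (b + 1 + 1) - estar (b + 1) := by omega
      _ ≤ estar (a + b + 1 + 1) := by
          have := estar_add_estar_succ_le (show b + 1 ≤ a + b + 1 by omega)
          omega

theorem sum_estar_succ_le {ι : Type*} (s : Finset ι) (m : ι → ℕ) :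
    ∑ i ∈ s, estar (m i + 1) ≤ estar (∑ i ∈ s, m i + 1) := by
  classical
  induction s using Finset.induction with
  | empty => simp [estar]
  | insert a s ha ih =>
    rw [Finset.sum_insert ha, Finset.sum_insert ha, add_assoc]
    exact (Nat.add_le_add_left ih _).trans (estar_succ_add_estar_succ_le _ _)

namespace BipGraph

variable {V : Type} [DecidableEq V]

theorem e_le_card_L_mul_card_R (A : BipGraph V) : A.e ≤ A.L.card * A.R.card :=
  (Finset.card_le_card A.E_sub).trans_eq (Finset.card_product _ _)

theorem v_eq_card_L_add_card_R (A : BipGraph V) : A.v = A.L.card + A.R.card :=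
  Finset.card_union_of_disjoint A.disj

theorem e_le_estar_v (A : BipGraph V) : A.e ≤ estar A.v :=
  A.e_le_card_L_mul_card_R.trans (A.v_eq_card_L_add_card_R ▸ mul_le_estar _ _)

theorem verts_induce (A : BipGraph V) (S : Finset V) : (A.induce S).verts = A.verts ∩ S :=
  (Finset.union_inter_distrib_right _ _ _).symm

section Fibers

variable {ι : Type*} [DecidableEq ι]

def fiber (A : BipGraph V) (f : V → ι) (i : ι) : BipGraph V :=
  A.induce (A.verts.filter fun x => f x = i)

theorem v_fiber (A : BipGraph V) (f : V → ι) (i : ι) :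
    (A.fiber f i).v = (A.verts.filter fun x => f x = i).card := by
  rw [fiber, v, verts_induce, Finset.inter_eq_right.mpr (Finset.filter_subset _ _)]

theorem v_eq_sum_v_fiber [Fintype ι] (A : BipGraph V) (f : V → ι) : A.v = ∑ i, (A.fiber f i).v := by
  simp only [v_fiber]
  exact Finset.card_eq_sum_card_fiberwise fun _ _ => Finset.mem_univ _

theorem e_eq_sum_e_fiber [Fintype ι] (A : BipGraph V) (f : V → ι) (hf : ∀ p ∈ A.E, f p.1 = f p.2) :
    A.e = ∑ i, (A.fiber f i).e := by
  rw [e, Finset.card_eq_sum_card_fiberwise fun p _ => Finset.mem_univ (f p.1)]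
  refine Finset.sum_congr rfl fun i _ => congrArg Finset.card (Finset.filter_congr fun p hp => ?_)
  have hLR := Finset.mem_product.mp (A.E_sub hp)
  simp only [Finset.mem_filter, verts, Finset.mem_union, hLR, true_or, or_true, true_and, ← hf p hp,
    and_self]

theorem e_le_estar_of_labelling [Fintype ι] (A : BipGraph V) (f : V → ι)
    (hf : ∀ p ∈ A.E, f p.1 = f p.2) (hsurj : ∀ i, ∃ x ∈ A.verts, f x = i) :
    A.e ≤ estar (A.v - Fintype.card ι + 1) := by
  have hpos : ∀ i, 1 ≤ (A.fiber f i).v := fun i => by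
    obtain ⟨x, hx, rfl⟩ := hsurj i
    rw [v_fiber, Nat.one_le_iff_ne_zero, Ne, Finset.card_eq_zero]
    exact Finset.ne_empty_of_mem (Finset.mem_filter.mpr ⟨hx, rfl⟩)
  have hsum : A.v - Fintype.card ι = ∑ i, ((A.fiber f i).v - 1) := by
    rw [Finset.sum_tsub_distrib _ fun i _ => hpos i, ← v_eq_sum_v_fiber, Finset.sum_const,
      Finset.card_univ, smul_eq_mul, mul_one]
  calc A.e = ∑ i, (A.fiber f i).e := A.e_eq_sum_e_fiber f hf
    _ ≤ ∑ i, estar ((A.fiber f i).v - 1 + 1) :=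
        Finset.sum_le_sum fun i _ => (Nat.sub_add_cancel (hpos i)).symm ▸ e_le_estar_v _
    _ ≤ estar (A.v - Fintype.card ι + 1) := hsum ▸ sum_estar_succ_le _ _

end Fibers

theorem e_le_estar_k_add_one (A : BipGraph V) : A.e ≤ estar (A.k + 1) := by
  classical
  rcases isEmpty_or_nonempty {x // x ∈ A.verts} with hA | ⟨⟨x₀⟩⟩
  · have hv : A.v = 0 := Finset.card_eq_zero.mpr (Finset.eq_empty_of_forall_notMem
      fun x hx => hA.false ⟨x, hx⟩)
    exact A.e_le_estar_v.trans (estar_mono (by omega))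
  · let G := A.graph
    have : Fintype G.ConnectedComponent := Fintype.ofFinite _
    let f : V → G.ConnectedComponent := fun x =>
      if hx : x ∈ A.verts then G.connectedComponentMk ⟨x, hx⟩ else G.connectedComponentMk x₀
    have hf : ∀ p ∈ A.E, f p.1 = f p.2 := fun p hp => by
      have hLR := Finset.mem_product.mp (A.E_sub hp)
      have h₁ : p.1 ∈ A.verts := Finset.mem_union_left _ hLR.1
      have h₂ : p.2 ∈ A.verts := Finset.mem_union_right _ hLR.2
      simp only [f, dif_pos h₁, dif_pos h₂]
      exact SimpleGraph.ConnectedComponent.connectedComponentMk_eq_of_adj (Or.inl hp)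
    have hsurj : ∀ K, ∃ x ∈ A.verts, f x = K := fun K => by
      obtain ⟨⟨x, hx⟩, rfl⟩ := K.exists_rep
      exact ⟨x, hx, dif_pos hx⟩
    simpa only [k, CC, Nat.card_eq_fintype_card] using A.e_le_estar_of_labelling f hf hsurj

theorem k_lt_v (A : BipGraph V) (hA : A.verts.Nonempty) : A.k < A.v := by
  obtain ⟨x, hx⟩ := hA
  have : Nonempty A.graph.ConnectedComponent := ⟨A.graph.connectedComponentMk ⟨x, hx⟩⟩
  have : Finite A.graph.ConnectedComponent := Quot.finite _
  have hCC : 0 < A.CC := Nat.card_pos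
  have hv : 0 < A.v := Finset.card_pos.mpr ⟨x, hx⟩
  rw [k]
  omega

theorem e_disjUnion (A B : BipGraph V) (h : Disjoint A.verts B.verts) :
    (A.disjUnion B h).e = A.e + B.e := by
  refine Finset.card_union_of_disjoint (Finset.disjoint_left.mpr fun p hpA hpB => ?_)
  exact Finset.disjoint_left.mp h (Finset.mem_union_left _ (Finset.mem_product.mp (A.E_sub hpA)).1)
    (Finset.mem_union_left _ (Finset.mem_product.mp (B.E_sub hpB)).1)

def balancedComplete (o n : ℕ) : BipGraph ℕ where
  L := Finset.Ico o (o + n / 2)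
  R := Finset.Ico (o + n / 2) (o + n)
  disj := Finset.Ico_disjoint_Ico_consecutive _ _ _
  E := Finset.Ico o (o + n / 2) ×ˢ Finset.Ico (o + n / 2) (o + n)
  E_sub := subset_rfl

theorem verts_balancedComplete (o n : ℕ) :
    (balancedComplete o n).verts = Finset.Ico o (o + n) :=
  Finset.Ico_union_Ico_eq_Ico (Nat.le_add_right _ _) (by omega)

theorem e_balancedComplete (o n : ℕ) : (balancedComplete o n).e = estar n := by
  rw [e, balancedComplete, Finset.card_product, Nat.card_Ico, Nat.card_Ico, estar]
  congr 1 <;> omega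

theorem k_balancedComplete_succ_le (o c : ℕ) : (balancedComplete o (c + 1)).k ≤ c := by
  have hv : (balancedComplete o (c + 1)).v = c + 1 := by
    rw [v, verts_balancedComplete, Nat.card_Ico]
    omega
  have := (balancedComplete o (c + 1)).k_lt_v ⟨o, by simp [verts_balancedComplete]⟩
  omega

end BipGraph

open BipGraph in
theorem fmax_eq (c d : ℕ) : fmax c d = estar (c + 1) + estar (d + 1) := by
  refine IsGreatest.csSup_eq ⟨?_, ?_⟩
  · refine ⟨balancedComplete 0 (c + 1), balancedComplete (c + 1) (d + 1), ?_,
      k_balancedComplete_succ_le _ _, k_balancedComplete_succ_le _ _, ?_⟩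
    · rw [verts_balancedComplete, verts_balancedComplete, zero_add]
      exact Finset.Ico_disjoint_Ico_consecutive _ _ _
    · rw [e_disjUnion, e_balancedComplete, e_balancedComplete]
  · rintro _ ⟨B, C, h, hB, hC, rfl⟩
    rw [e_disjUnion]
    exact add_le_add (B.e_le_estar_k_add_one.trans (estar_mono (by omega)))
      (C.e_le_estar_k_add_one.trans (estar_mono (by omega)))

/-- (1) `f(c,d) = e*(c+1) + e*(d+1)`; (2) if `1 ≤ d ≤ c` then
`f(c+1, d-1) ≥ f(c,d)`. -/
theorem fmax_eq_and_mono :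
    (∀ c d : ℕ, fmax c d = estar (c + 1) + estar (d + 1)) ∧
    (∀ c d : ℕ, 1 ≤ d → d ≤ c → fmax c d ≤ fmax (c + 1) (d - 1)) := by
  refine ⟨fmax_eq, fun c d hd hdc => ?_⟩
  rw [fmax_eq, fmax_eq, Nat.sub_add_cancel hd]
  exact estar_add_estar_succ_le (by omega)
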